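/- arXiv:1601.03506 — 5 statements merged into one kernel-verified Lean document; each statement's English description precedes it below -/
import Mathlib

section
/- Let p be a prime with p > 3 and p ≡ 3 (mod 4) (so that (p+1)/2 is an even integer). Then the Bernoulli number B_{(p+1)/2} is a p-integral rational number that is not congruent to 0 modulo p; equivalently, its p-adic valuation padicValRat p (bernoulli ((p+1)/2)) equals 0. -/
/-!
Write `p = 2q + 1`, `k = q + 1` and `S_i = ∑_{m<p} m^i`. Since `p ∣ S_l` for `l < p - 1`,
Faulhaber's formula shows by induction on `i` that `B_i` is `p`-integral and `B_i ≡ S_i / p (mod p)`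
whenever `i + 1 < p`. Doubling the summation variable gives Voronoi's congruence
`(2^k - 1) S_k ≡ k p ∑_{b<q} (2b+1)^q (mod p²)`. By Euler's criterion that last sum is congruent
mod `p` to a sum of `q` Legendre symbols; as `q` is odd and `q < p`, it is a unit mod `p`. Hence
`(2^k - 1) B_k ≡ k ∑_{b<q} (2b+1)^q` is a `p`-adic unit, and so is `B_k`.
-/

open Finset

theorem prime_dvd_sum_range_pow {p : ℕ} (hp : p.Prime) {l : ℕ} (hl : l < p - 1) :
    (p : ℤ) ∣ ∑ m ∈ range p, (m : ℤ) ^ l := by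
  have := Fact.mk hp
  rw [← ZMod.intCast_zmod_eq_zero_iff_dvd]
  push_cast
  rw [← FiniteField.sum_pow_lt_card_sub_one (ZMod p) l (by rwa [ZMod.card])]
  exact sum_nbij' (↑) ZMod.val (by simp) (by simp [ZMod.val_lt])
    (fun m hm => ZMod.val_cast_of_lt (mem_range.1 hm)) (fun x _ => ZMod.natCast_zmod_val x)
    (fun _ _ => rfl)

theorem Finset.sum_range_two_mul_add_one {M : Type*} [AddCommMonoid M] (f : ℕ → M) (q : ℕ) :
    ∑ m ∈ range (2 * q + 1), f m
      = ∑ j ∈ range (q + 1), f (2 * j) + ∑ b ∈ range q, f (2 * b + 1) := by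
  induction q with
  | zero => simp
  | succ q ih =>
    rw [show 2 * (q + 1) + 1 = 2 * q + 1 + 1 + 1 by ring, sum_range_succ, sum_range_succ, ih,
      sum_range_succ _ (q + 1), sum_range_succ (fun b => f (2 * b + 1)) q]
    rw [show 2 * (q + 1) = 2 * q + 1 + 1 by ring]
    abel

theorem sq_dvd_two_pow_sub_one_mul_sum_range_pow {R : Type*} [CommRing R] (q k : ℕ) :
    ((2 * q + 1 : ℕ) : R) ^ 2 ∣ (2 ^ k - 1) * ∑ m ∈ range (2 * q + 1), (m : R) ^ k
      - k * (2 * q + 1 : ℕ) * ∑ b ∈ range q, (2 * (b : R) + 1) ^ (k - 1) := by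
  set n : R := ((2 * q + 1 : ℕ) : R)
  have hsplit := sum_range_two_mul_add_one (fun m => (m : R) ^ k) q
  push_cast at hsplit
  have hdouble : 2 ^ k * ∑ m ∈ range (2 * q + 1), (m : R) ^ k
      = ∑ j ∈ range (q + 1), (2 * (j : R)) ^ k + ∑ b ∈ range q, (2 * (b : R) + 1 + n) ^ k := by
    rw [mul_sum, show 2 * q + 1 = (q + 1) + q by ring, sum_range_add]
    congr 1 <;> refine sum_congr rfl fun b _ => ?_ <;> rw [← mul_pow]
    congr 1
    simp only [n]
    push_cast
    ring
  have hterms : (2 ^ k - 1) * ∑ m ∈ range (2 * q + 1), (m : R) ^ k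
        - k * n * ∑ b ∈ range q, (2 * (b : R) + 1) ^ (k - 1)
      = ∑ b ∈ range q, ((2 * (b : R) + 1 + n) ^ k
          - (2 * (b : R) + 1) ^ (k - 1) * n * k - (2 * (b : R) + 1) ^ k) := by
    simp only [sum_sub_distrib, ← sum_mul]
    linear_combination hdouble - hsplit
  rw [hterms]
  exact dvd_sum fun b _ => sq_dvd_add_pow_sub_sub n _ k

theorem not_dvd_sum_of_forall_eq_one_or_neg_one {ι : Type*} {s : Finset ι} {f : ι → ℤ} {n : ℕ}
    (hf : ∀ i ∈ s, f i = 1 ∨ f i = -1) (hs : Odd #s) (hsn : #s < n) :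
    ¬ (n : ℤ) ∣ ∑ i ∈ s, f i := by
  have hodd : Odd (∑ i ∈ s, f i) := by
    rw [← ZMod.intCast_eq_one_iff_odd, Int.cast_sum, sum_congr rfl fun i hi =>
      show ((f i : ℤ) : ZMod 2) = 1 by rcases hf i hi with h | h <;> simp [h]]
    simpa using (ZMod.natCast_eq_one_iff_odd).2 hs
  have habs : |∑ i ∈ s, f i| ≤ #s :=
    (abs_sum_le_sum_abs _ _).trans_eq <| by
      rw [sum_congr rfl fun i hi => show |f i| = 1 by rcases hf i hi with h | h <;> simp [h]]
      simp
  intro hdvd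
  have := Int.eq_zero_of_abs_lt_dvd hdvd (by omega)
  simp [this] at hodd

theorem not_dvd_sum_range_odd_pow_half {p : ℕ} [Fact p.Prime] (hp4 : p % 4 = 3) :
    ¬ (p : ℤ) ∣ ∑ b ∈ range (p / 2), (2 * (b : ℤ) + 1) ^ (p / 2) := by
  have hunit : ∀ b ∈ range (p / 2), ((2 * (b : ℤ) + 1 : ℤ) : ZMod p) ≠ 0 := by
    intro b hb hdvd
    rw [ZMod.intCast_zmod_eq_zero_iff_dvd] at hdvd
    have := Int.le_of_dvd (by positivity) hdvd
    simp at hb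
    omega
  rw [← ZMod.intCast_zmod_eq_zero_iff_dvd, Int.cast_sum,
    sum_congr rfl fun b _ => by rw [Int.cast_pow, ← legendreSym.eq_pow], ← Int.cast_sum,
    ZMod.intCast_zmod_eq_zero_iff_dvd]
  exact not_dvd_sum_of_forall_eq_one_or_neg_one
    (fun b hb => legendreSym.eq_one_or_neg_one p (hunit b hb))
    (by rw [card_range]; exact Nat.odd_iff.2 (by omega)) (by simp; omega)

theorem sum_range_pow_div_sub_bernoulli {n : ℕ} (hn : n ≠ 0) (i : ℕ) :
    (∑ m ∈ range n, (m : ℚ) ^ i) / n - bernoulli i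
      = ∑ l ∈ range i, bernoulli l * (i + 1).choose l * n ^ (i - l) / (i + 1) := by
  rw [sum_range_pow, sum_range_succ, Nat.choose_succ_self_right, Nat.add_sub_cancel_left, add_div,
    sum_div, add_sub_assoc,
    show bernoulli i * ((i + 1 : ℕ) : ℚ) * n ^ 1 / (i + 1) / n - bernoulli i = 0 by
      field_simp; push_cast; ring,
    add_zero]
  refine sum_congr rfl fun l hl => ?_
  rw [show i + 1 - l = i - l + 1 by have := mem_range.1 hl; omega, pow_succ]
  field_simp

namespace Padic

variable {p : ℕ} [Fact p.Prime]

theorem norm_bernoulli_sub_sum_range_pow_div_le {i : ℕ} (hi : i + 1 < p)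
    (hB : ∀ l < i, ‖(bernoulli l : ℚ_[p])‖ ≤ 1) :
    ‖(bernoulli i : ℚ_[p]) - (∑ m ∈ range p, (m : ℚ_[p]) ^ i) / p‖ ≤ (p : ℝ)⁻¹ := by
  have hp := (Fact.out : p.Prime)
  have h := congrArg ((↑) : ℚ → ℚ_[p]) (sum_range_pow_div_sub_bernoulli hp.ne_zero i)
  push_cast at h
  rw [norm_sub_rev, h]
  have hi1 : ‖(i : ℚ_[p]) + 1‖ = 1 := by
    exact_mod_cast norm_natCast_eq_one_iff.2 (Nat.coprime_of_lt_prime i.succ_ne_zero hi hp)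
  refine IsUltrametricDist.norm_sum_le_of_forall_le_of_nonneg (by positivity) fun l hl => ?_
  have hl := mem_range.1 hl
  rw [norm_div, hi1, div_one, norm_mul, norm_mul, norm_pow, norm_p]
  have hpow : (p : ℝ)⁻¹ ^ (i - l) ≤ (p : ℝ)⁻¹ :=
    pow_le_of_le_one (by positivity) (inv_le_one_of_one_le₀ (by exact_mod_cast hp.one_le))
      (by omega)
  calc ‖(bernoulli l : ℚ_[p])‖ * ‖((i + 1).choose l : ℚ_[p])‖ * (p : ℝ)⁻¹ ^ (i - l)
      ≤ 1 * 1 * (p : ℝ)⁻¹ := by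
        gcongr
        · exact hB l hl
        · exact IsUltrametricDist.norm_natCast_le_one _ _
    _ = (p : ℝ)⁻¹ := by simp

theorem norm_bernoulli_le_one {i : ℕ} (hi : i + 1 < p) : ‖(bernoulli i : ℚ_[p])‖ ≤ 1 := by
  induction i using Nat.strong_induction_on with
  | _ i ih =>
    have hp := (Fact.out : p.Prime)
    have happrox := norm_bernoulli_sub_sum_range_pow_div_le hi fun l hl => ih l hl (by omega)
    obtain ⟨c, hc⟩ := prime_dvd_sum_range_pow hp (l := i) (by omega)
    have hS : (∑ m ∈ range p, (m : ℚ_[p]) ^ i) / p = c := by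
      have := congrArg ((↑) : ℤ → ℚ_[p]) hc
      push_cast at this
      rw [this, mul_div_cancel_left₀ _ (Nat.cast_ne_zero.2 hp.ne_zero)]
    rw [hS] at happrox
    calc ‖(bernoulli i : ℚ_[p])‖ = ‖(c : ℚ_[p]) + (bernoulli i - c)‖ := by rw [add_sub_cancel]
      _ ≤ max ‖(c : ℚ_[p])‖ ‖(bernoulli i : ℚ_[p]) - c‖ := IsUltrametricDist.norm_add_le_max _ _
      _ ≤ 1 := max_le (norm_int_le_one c) <|
          happrox.trans (inv_le_one_of_one_le₀ (by exact_mod_cast hp.one_le))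

theorem norm_intCast_div_sub_le_of_sq_dvd {a b : ℤ} (h : (p : ℤ) ^ 2 ∣ a - p * b) :
    ‖(a : ℚ_[p]) / p - b‖ ≤ (p : ℝ)⁻¹ := by
  have hp0 : (p : ℚ_[p]) ≠ 0 := Nat.cast_ne_zero.2 (Fact.out : p.Prime).ne_zero
  have h2 := (norm_int_le_pow_iff_dvd (a - p * b) 2).2 (by exact_mod_cast h)
  rw [show (a : ℚ_[p]) / p - b = ((a - p * b : ℤ) : ℚ_[p]) / p by push_cast; field_simp,
    norm_div, norm_p, div_le_iff₀ (by simp [(Fact.out : p.Prime).pos])]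
  simpa [zpow_neg, ← pow_two] using h2

theorem norm_eq_one_of_norm_mul_sub_lt_one {u x y : ℚ_[p]} (hu : ‖u‖ ≤ 1) (hx : ‖x‖ ≤ 1)
    (hy : ‖y‖ = 1) (h : ‖u * x - y‖ < 1) : ‖x‖ = 1 := by
  have hux := norm_eq_of_norm_sub_lt_right (h.trans_eq hy.symm)
  rw [norm_mul, hy] at hux
  nlinarith [norm_nonneg u, norm_nonneg x]

end Padic

theorem padicValRat_eq_zero_of_norm_eq_one {p : ℕ} [Fact p.Prime] {x : ℚ}
    (h : ‖(x : ℚ_[p])‖ = 1) : padicValRat p x = 0 := by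
  have hx : (x : ℚ_[p]) ≠ 0 := norm_ne_zero_iff.1 (h ▸ one_ne_zero)
  rw [Padic.norm_eq_zpow_neg_valuation hx, Padic.valuation_ratCast] at h
  have h1 : (1 : ℝ) < p := by exact_mod_cast (Fact.out : p.Prime).one_lt
  simpa using (zpow_eq_one_iff_right₀ (by positivity) h1.ne').1 h

/-- **`B_{(p+1)/2} ≢ 0 (mod p)` for `p ≡ 3 (mod 4)`.**
For a prime `p > 3` with `p ≡ 3 (mod 4)`, the Bernoulli number `B_{(p+1)/2}` is
`p`-integral and not divisible by `p`: its `p`-adic valuation is `0`. -/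
theorem bernoulli_half_succ_padicValRat_eq_zero
    (p : ℕ) (hp : p.Prime) (hp3 : 3 < p) (hp4 : p % 4 = 3) :
    padicValRat p (bernoulli ((p + 1) / 2)) = 0 := by
  have := Fact.mk hp
  generalize hk : (p + 1) / 2 = k
  have hvoronoi := sq_dvd_two_pow_sub_one_mul_sum_range_pow (R := ℤ) (p / 2) k
  rw [show 2 * (p / 2) + 1 = p by omega, show k - 1 = p / 2 by omega,
    mul_comm (k : ℤ), mul_assoc] at hvoronoi
  have hcong := Padic.norm_intCast_div_sub_le_of_sq_dvd hvoronoi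
  have hO := (Padic.norm_int_le_one _).antisymm
    (not_lt.1 (mt Padic.norm_intCast_lt_one_iff.1 (not_dvd_sum_range_odd_pow_half (p := p) hp4)))
  have hu := Padic.norm_int_le_one (p := p) (2 ^ k - 1)
  push_cast at hcong hO hu
  set S := ∑ m ∈ range p, (m : ℚ_[p]) ^ k
  set O := ∑ b ∈ range (p / 2), (2 * (b : ℚ_[p]) + 1) ^ (p / 2)
  set u : ℚ_[p] := 2 ^ k - 1
  have hkO : ‖(k : ℚ_[p]) * O‖ = 1 := by
    rw [norm_mul, hO, mul_one,
      Padic.norm_natCast_eq_one_iff.2 (Nat.coprime_of_lt_prime (by omega) (by omega) hp)]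
  have happrox : ‖(bernoulli k : ℚ_[p]) - S / p‖ ≤ (p : ℝ)⁻¹ :=
    Padic.norm_bernoulli_sub_sum_range_pow_div_le (by omega)
      fun l hl => Padic.norm_bernoulli_le_one (by omega)
  refine padicValRat_eq_zero_of_norm_eq_one <| Padic.norm_eq_one_of_norm_mul_sub_lt_one hu
    (Padic.norm_bernoulli_le_one (by omega)) hkO ?_
  calc ‖u * bernoulli k - k * O‖ = ‖(u * S / p - k * O) + u * (bernoulli k - S / p)‖ := by
        ring_nf
    _ ≤ max ‖u * S / p - k * O‖ ‖u * (bernoulli k - S / p)‖ :=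
        IsUltrametricDist.norm_add_le_max _ _
    _ ≤ (p : ℝ)⁻¹ := max_le hcong <| by
        rw [norm_mul]
        exact (mul_le_of_le_one_left (norm_nonneg _) hu).trans happrox
    _ < 1 := inv_lt_one_of_one_lt₀ (by exact_mod_cast hp.one_lt)
end

section
/- Let p be a prime with p > 3 and p ≡ 3 (mod 4), let χ(a) = legendreSym p a be the Legendre symbol mod p (the Dirichlet character of the imaginary quadratic field K = ℚ(√−p) of discriminant −p), and set n = (p−1)/2. Let β := p^{n−1} · Σ_{a=1}^{p−1} χ(a) · B_n(a/p) be the generalized Bernoulli number B_{n,χ}, where B_n(x) is the n-th Bernoulli polynomial. Then p·β ≡ −1 (mod p); that is, the rational number p·β + 1 is either 0 or has p-adic valuation padicValRat p (p·β + 1) ≥ 1. -/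
/-!
With `n = (p - 1) / 2`, expand `p^n B_n(a/p) = Σᵢ C(n,i) Bᵢ a^(n-i) pⁱ`. For `1 ≤ i ≤ n < p - 1`
von Staudt–Clausen makes `Bᵢ` `p`-integral, so `p·B_{n,χ} ≡ Σₐ χ(a) aⁿ (mod p)`. Euler's criterion
gives `χ(a) aⁿ ≡ χ(a)² = 1`, so the sum is `≡ p - 1 ≡ -1`.
-/

open Finset

theorem eq_zero_or_one_le_padicValRat_of_padicNorm_le_inv {p : ℕ} [Fact p.Prime] {x : ℚ}
    (hx : padicNorm p x ≤ (p : ℚ)⁻¹) : x = 0 ∨ 1 ≤ padicValRat p x := by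
  rcases eq_or_ne x 0 with rfl | hx0
  · exact Or.inl rfl
  right
  have hp : (1 : ℚ) < p := by exact_mod_cast (Fact.out : p.Prime).one_lt
  rw [padicNorm.eq_zpow_of_nonzero hx0, ← zpow_neg_one] at hx
  have := (zpow_le_zpow_iff_right₀ hp).1 hx
  omega

theorem padicNorm_bernoulli_le_one {p i : ℕ} [Fact p.Prime] (hi : i + 1 < p) :
    padicNorm p (bernoulli i) ≤ 1 := by
  obtain ⟨k, rfl | rfl⟩ := Nat.even_or_odd' i
  · obtain ⟨z, hz⟩ := Bernoulli.vonStaudt_clausen k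
    rw [eq_sub_of_add_eq hz.symm]
    refine padicNorm.sub.trans
      (max_le (padicNorm.of_int z) (padicNorm.sum_le' (fun q hq => ?_) zero_le_one))
    have hqp : ¬ p ∣ q := by
      simp only [mem_filter, mem_range] at hq
      exact Nat.not_dvd_of_pos_of_lt hq.2.1.pos (by omega)
    rw [padicNorm.div, padicNorm.one, (padicNorm.nat_eq_one_iff q).2 hqp, div_one]
  · rcases k with _ | k
    · have h2 : ¬ p ∣ 2 := Nat.not_dvd_of_pos_of_lt two_pos (by omega)
      have hnorm2 : padicNorm p 2 = 1 := by exact_mod_cast (padicNorm.nat_eq_one_iff 2).2 h2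
      rw [bernoulli_one, neg_div, padicNorm.neg, padicNorm.div, padicNorm.one, hnorm2, div_one]
    · rw [bernoulli_eq_zero_of_odd (odd_two_mul_add_one _) (by omega), padicNorm.zero]
      exact zero_le_one

theorem pow_mul_bernoulli_eval_div {y : ℚ} (hy : y ≠ 0) (n : ℕ) (x : ℚ) :
    y ^ n * (Polynomial.bernoulli n).eval (x / y) =
      ∑ i ∈ range (n + 1), bernoulli i * n.choose i * x ^ (n - i) * y ^ i := by
  rw [Polynomial.bernoulli, Polynomial.eval_finsetSum, mul_sum]
  refine sum_congr rfl fun i hi => ?_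
  have hy_pow : y ^ n = y ^ (n - i) * y ^ i := by
    rw [← pow_add, Nat.sub_add_cancel (Nat.lt_succ_iff.1 (mem_range.1 hi))]
  rw [Polynomial.eval_monomial, div_pow, hy_pow]
  field_simp

theorem padicNorm_pow_mul_bernoulli_eval_div_sub_pow_le {p n : ℕ} [Fact p.Prime]
    (hn : n + 1 < p) {x : ℚ} (hx : padicNorm p x ≤ 1) :
    padicNorm p ((p : ℚ) ^ n * (Polynomial.bernoulli n).eval (x / p) - x ^ n) ≤
      (p : ℚ)⁻¹ := by
  have hp0 : (p : ℚ) ≠ 0 := by exact_mod_cast (Fact.out : p.Prime).ne_zero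
  rw [pow_mul_bernoulli_eval_div hp0, sum_range_succ']
  simp only [bernoulli_zero, Nat.choose_zero_right, Nat.cast_one, Nat.sub_zero, pow_zero,
    mul_one, one_mul, add_sub_cancel_right]
  refine padicNorm.sum_le' (fun i hi => ?_) (by positivity)
  have hB : padicNorm p (bernoulli (i + 1)) ≤ 1 :=
    padicNorm_bernoulli_le_one (by have := mem_range.1 hi; omega)
  have hC : padicNorm p (n.choose (i + 1)) ≤ 1 := padicNorm.of_nat _
  have hX : padicNorm p (x ^ (n - (i + 1))) ≤ 1 := by
    rw [IsAbsoluteValue.abv_pow (padicNorm p)]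
    exact pow_le_one₀ (padicNorm.nonneg x) hx
  have hP : padicNorm p ((p : ℚ) ^ i) ≤ 1 := by exact_mod_cast padicNorm.of_nat (p ^ i)
  have hp : padicNorm p p ≤ (p : ℚ)⁻¹ := padicNorm.padicNorm_p_of_prime.le
  calc padicNorm p (bernoulli (i + 1) * n.choose (i + 1) * x ^ (n - (i + 1)) * p ^ (i + 1))
      = padicNorm p (bernoulli (i + 1)) * padicNorm p (n.choose (i + 1)) *
          padicNorm p (x ^ (n - (i + 1))) * padicNorm p ((p : ℚ) ^ i) * padicNorm p p := by
        simp only [padicNorm.mul, pow_succ, mul_assoc]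
    _ ≤ 1 * 1 * 1 * 1 * (p : ℚ)⁻¹ := by gcongr <;> exact padicNorm.nonneg _
    _ = (p : ℚ)⁻¹ := by simp

theorem padicNorm_legendreSym_mul_pow_sub_one_le {p : ℕ} [Fact p.Prime] {a : ℤ}
    (ha : (a : ZMod p) ≠ 0) :
    padicNorm p (legendreSym p a * (a : ℚ) ^ (p / 2) - 1) ≤ (p : ℚ)⁻¹ := by
  -- Euler's criterion `χ(a) ≡ a^(p/2)` turns `χ(a) a^(p/2)` into `χ(a)² = 1`.
  have hdvd : ((p ^ 1 : ℕ) : ℤ) ∣ legendreSym p a * a ^ (p / 2) - 1 := by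
    rw [pow_one, ← ZMod.intCast_zmod_eq_zero_iff_dvd]
    push_cast
    rw [← legendreSym.eq_pow, ← sq, ← Int.cast_pow, legendreSym.sq_one p ha, Int.cast_one,
      sub_self]
  have := padicNorm.dvd_iff_norm_le.1 hdvd
  push_cast at this
  simpa using this

theorem padicNorm_legendreSym_mul_pow_mul_bernoulli_eval_sub_one_le {p : ℕ} [Fact p.Prime]
    (hp : p ≠ 2) {a : ℤ} (ha : (a : ZMod p) ≠ 0) :
    padicNorm p (legendreSym p a *
      ((p : ℚ) ^ (p / 2) * (Polynomial.bernoulli (p / 2)).eval ((a : ℚ) / p)) - 1) ≤ (p : ℚ)⁻¹ := by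
  have hn : p / 2 + 1 < p := by have := (Fact.out : p.Prime).two_le; omega
  have hχ : padicNorm p (legendreSym p a) ≤ 1 := padicNorm.of_int _
  have hB := padicNorm_pow_mul_bernoulli_eval_div_sub_pow_le hn (padicNorm.of_int a)
  set P := (p : ℚ) ^ (p / 2) * (Polynomial.bernoulli (p / 2)).eval ((a : ℚ) / p)
  rw [show (legendreSym p a : ℚ) * P - 1 = legendreSym p a * (P - (a : ℚ) ^ (p / 2)) +
      (legendreSym p a * (a : ℚ) ^ (p / 2) - 1) by ring]
  refine padicNorm.nonarchimedean.trans (max_le ?_ (padicNorm_legendreSym_mul_pow_sub_one_le ha))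
  rw [padicNorm.mul]
  calc _ ≤ 1 * (p : ℚ)⁻¹ := by gcongr; exact padicNorm.nonneg _
    _ = (p : ℚ)⁻¹ := one_mul _

theorem mul_genBernoulli_legendre_congruent_neg_one_general
    (p : ℕ) [hpF : Fact p.Prime] (hp4 : p % 4 = 3)
    (β : ℚ)
    (hβ : β = (p : ℚ) ^ ((p - 1) / 2 - 1) *
      ∑ a ∈ Finset.Icc 1 (p - 1), (legendreSym p a : ℚ) *
        (Polynomial.bernoulli ((p - 1) / 2)).eval ((a : ℚ) / p)) :
    (p : ℚ) * β + 1 = 0 ∨ 1 ≤ padicValRat p ((p : ℚ) * β + 1) := by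
  have hn : (p - 1) / 2 = p / 2 := by omega
  have hpβ : (p : ℚ) * β + 1 = (∑ a ∈ Icc 1 (p - 1), ((legendreSym p a : ℚ) *
      ((p : ℚ) ^ (p / 2) * (Polynomial.bernoulli (p / 2)).eval ((a : ℚ) / p)) - 1)) + p := by
    have hpow : (p : ℚ) * (p : ℚ) ^ (p / 2 - 1) = (p : ℚ) ^ (p / 2) := by
      rw [← pow_succ']; congr 1; omega
    rw [hβ, hn, ← mul_assoc, hpow, mul_sum, sum_sub_distrib, sum_const, Nat.card_Icc,
      nsmul_one, Nat.add_sub_cancel, Nat.cast_pred (by omega)]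
    simp only [mul_left_comm ((p : ℚ) ^ (p / 2))]
    ring
  rw [hpβ]
  refine eq_zero_or_one_le_padicValRat_of_padicNorm_le_inv (padicNorm.nonarchimedean.trans
    (max_le (padicNorm.sum_le' (fun a ha => ?_) (by positivity)) padicNorm.padicNorm_p_of_prime.le))
  rw [mem_Icc] at ha
  have ha : ((a : ℤ) : ZMod p) ≠ 0 := by
    rw [Int.cast_natCast, Ne, ZMod.natCast_eq_zero_iff]
    exact Nat.not_dvd_of_pos_of_lt (by omega) (by omega)
  simpa only [Int.cast_natCast] using
    padicNorm_legendreSym_mul_pow_mul_bernoulli_eval_sub_one_le (by omega) ha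

/-- **von Staudt–Clausen for `B_{(p−1)/2, χ_K}`, `K = ℚ(√−p)`.**
For a prime `p > 3` with `p ≡ 3 (mod 4)`, let `χ = legendreSym p` and
`β = p^{n−1} Σ_{a=1}^{p−1} χ(a) B_n(a/p)` with `n = (p−1)/2` (the generalized
Bernoulli number `B_{(p−1)/2,χ_K}`). Then `p·β ≡ −1 (mod p)`. -/
theorem mul_genBernoulli_legendre_congruent_neg_one
    (p : ℕ) [hpF : Fact p.Prime] (hp3 : 3 < p) (hp4 : p % 4 = 3)
    (β : ℚ)
    (hβ : β = (p : ℚ) ^ ((p - 1) / 2 - 1) *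
      ∑ a ∈ Finset.Icc 1 (p - 1), (legendreSym p a : ℚ) *
        (Polynomial.bernoulli ((p - 1) / 2)).eval ((a : ℚ) / p)) :
    (p : ℚ) * β + 1 = 0 ∨ 1 ≤ padicValRat p ((p : ℚ) * β + 1) :=
  mul_genBernoulli_legendre_congruent_neg_one_general p (hpF := hpF) hp4 β hβ
end

section
/- Let q be a prime with q ≡ 3 (mod 4) and write χ(a) = legendreSym q a (the Dirichlet character of the imaginary quadratic field K = ℚ(√−q)). Let p be an odd prime and N a positive integer with p ∤ N and χ(N) ≠ 1 (i.e. χ_K(N) = 0 or −1). Then p divides the integer Σ_{d ∣ N, d > 0} (χ(d) + χ(−(N/d))) · d^{p−1}. Since this sum equals a_{D_K}(N) · G_K(p−1; N) with normalizing factor a_{D_K}(N) = 1 + χ(−N) ∈ {1, 2} prime to p, this is the congruence G_K(p−1; N) ≡ 0 (mod p). -/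
/-!
Since `p ∤ N`, Fermat's little theorem gives `d ^ (p - 1) ≡ 1 (mod p)` for every divisor `d`
of `N`, so the sum is congruent to `Σ_{d ∣ N} (χ(d) + χ(-(N/d)))`. As `q ≡ 3 (mod 4)`, `χ` is
odd, and this becomes `Σ_{d ∣ N} χ(d) - Σ_{d ∣ N} χ(N/d)`, which vanishes because `d ↦ N/d`
permutes the divisors of `N`.
-/

open ZMod

theorem legendreSym.neg_of_mod_four_eq_three {q : ℕ} [Fact q.Prime] (hq4 : q % 4 = 3) (a : ℤ) :
    legendreSym q (-a) = -legendreSym q a := by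
  rw [legendreSym.at_neg (by omega), χ₄_nat_three_mod_four hq4, neg_one_mul]

theorem Nat.sum_divisors_mul_pow_card_sub_one_modEq {p N : ℕ} (hp : p.Prime) (hpN : ¬p ∣ N)
    (f : ℕ → ℤ) :
    ∑ d ∈ N.divisors, f d * (d : ℤ) ^ (p - 1) ≡ ∑ d ∈ N.divisors, f d [ZMOD p] := by
  refine Int.ModEq.sum fun d hd => ?_
  have hpd : IsCoprime (d : ℤ) p := by
    rw [Int.isCoprime_iff_gcd_eq_one, Int.gcd_natCast_natCast, Nat.gcd_comm,
      ← Nat.coprime_iff_gcd_eq_one, hp.coprime_iff_not_dvd]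
    exact fun h => hpN (h.trans (Nat.dvd_of_mem_divisors hd))
  simpa using (Int.ModEq.pow_card_sub_one_eq_one hp hpd).mul_left (f d)

theorem legendreSym.sum_divisors_add_neg_div_eq_zero {q : ℕ} [Fact q.Prime] (hq4 : q % 4 = 3)
    (N : ℕ) :
    ∑ d ∈ N.divisors, (legendreSym q d + legendreSym q (-((N / d : ℕ) : ℤ))) = 0 := by
  simp only [legendreSym.neg_of_mod_four_eq_three hq4, ← sub_eq_add_neg, Finset.sum_sub_distrib,
    Nat.sum_div_divisors N fun d => legendreSym q d, sub_self]

theorem legendre_divisor_sum_congruent_zero_general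
    (q : ℕ) [hqF : Fact q.Prime] (hq4 : q % 4 = 3)
    (p : ℕ) (hp : p.Prime)
    (N : ℕ) (hpN : ¬ p ∣ N) :
    (p : ℤ) ∣ ∑ d ∈ N.divisors,
      (legendreSym q d + legendreSym q (-((N / d : ℕ) : ℤ))) * (d : ℤ) ^ (p - 1) := by
  have h := Nat.sum_divisors_mul_pow_card_sub_one_modEq hp hpN
    fun d => legendreSym q d + legendreSym q (-((N / d : ℕ) : ℤ))
  rw [legendreSym.sum_divisors_add_neg_div_eq_zero hq4] at h
  simpa using h.symm.dvd

/-- **`G_K(p−1;N) ≡ 0 (mod p)` for `K = ℚ(√−q)`, `q ≡ 3 (mod 4)`.**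
Let `q ≡ 3 (mod 4)` be prime with character `χ = legendreSym q`, and let `p` be an
odd prime and `N > 0` with `p ∤ N` and `χ(N) ≠ 1`. Then
`p ∣ Σ_{0<d∣N} (χ(d) + χ(−N/d)) d^{p−1}`, i.e. `G_K(p−1;N) ≡ 0 (mod p)`. -/
theorem legendre_divisor_sum_congruent_zero
    (q : ℕ) [hqF : Fact q.Prime] (hq4 : q % 4 = 3)
    (p : ℕ) (hp : p.Prime) (hpodd : Odd p)
    (N : ℕ) (hN : 0 < N) (hpN : ¬ p ∣ N) (hχN : legendreSym q N ≠ 1) :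
    (p : ℤ) ∣ ∑ d ∈ N.divisors,
      (legendreSym q d + legendreSym q (-((N / d : ℕ) : ℤ))) * (d : ℤ) ^ (p - 1) :=
  legendre_divisor_sum_congruent_zero_general q (hqF := hqF) hq4 p hp N hpN
end

section
/- Let q be an odd prime, χ(a) = legendreSym q a the Legendre symbol mod q, s ≥ 0 an integer, and N a positive integer. Write β = v_q(N) for the q-adic valuation of N and N₂ = N / q^β. Then the following product formula holds: Σ_{d ∣ N, d>0} (χ(d) + χ(−(N/d))) · d^s = ( ∏_{ℓ prime, ℓ ∣ N₂} Σ_{t=0}^{v_ℓ(N)} χ(ℓ)^t · ℓ^{s·t} ) · ( 1 + χ(−N₂) · q^{s·β} ). -/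
/-!
Write `χ = legendreSym q` and `N = q ^ β * N₂` with `q ∤ N₂`. Since `χ` vanishes on multiples
of `q`, the first half of the sum only sees the divisors of `N₂`, where `d ↦ χ(d) d ^ s` is
multiplicative, giving the Euler product. In the second half, after `d ↦ N / d`, only the
divisors `q ^ β * e` with `e ∣ N₂` survive, and `χ(-N₂ / e) = χ(-N₂) χ(e)` because `χ(e) = ±1`;
so the second half is `χ(-N₂) q ^ (s β)` times the first.
-/

open Finset ArithmeticFunction

theorem Nat.sum_divisors_apply_div_comm {M : Type*} [AddCommMonoid M] (f : ℕ → ℕ → M) (n : ℕ) :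
    ∑ d ∈ n.divisors, f d (n / d) = ∑ d ∈ n.divisors, f (n / d) d :=
  (Nat.sum_divisorsAntidiagonal f).symm.trans (Nat.sum_divisorsAntidiagonal' f)

theorem Nat.sum_divisors_eq_sum_divisors_ordCompl {M : Type*} [AddCommMonoid M] {p : ℕ}
    {f : ℕ → M} (hf : ∀ d, p ∣ d → f d = 0) (n : ℕ) :
    ∑ d ∈ n.divisors, f d = ∑ d ∈ (ordCompl[p] n).divisors, f d := by
  rcases eq_or_ne n 0 with rfl | hn
  · simp
  refine (sum_subset (Nat.divisors_subset_of_dvd hn (Nat.ordCompl_dvd n p)) ?_).symm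
  intro d hd hd'
  refine hf d (not_not.mp fun hpd => hd' ?_)
  exact Nat.mem_divisors.mpr
    ⟨Nat.dvd_ordCompl_of_dvd_not_dvd (Nat.dvd_of_mem_divisors hd) hpd, (Nat.ordCompl_pos p hn).ne'⟩

theorem ArithmeticFunction.IsMultiplicative.sum_divisors_eq_prod_primeFactors {R : Type*}
    [CommSemiring R] {f : ArithmeticFunction R} (hf : f.IsMultiplicative) {n : ℕ} (hn : n ≠ 0) :
    ∑ d ∈ n.divisors, f d
      = ∏ p ∈ n.primeFactors, ∑ k ∈ range (n.factorization p + 1), f (p ^ k) := by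
  rw [← coe_mul_zeta_apply,
    (hf.mul isMultiplicative_zeta.natCast).multiplicative_factorization _ hn, Finsupp.prod,
    Nat.support_factorization]
  refine prod_congr rfl fun p hp => ?_
  rw [coe_mul_zeta_apply, Nat.sum_divisors_prime_pow (Nat.prime_of_mem_primeFactors hp)]

namespace legendreSym

variable (p : ℕ) [Fact p.Prime]

theorem eq_mul_mul_of_ne_zero (a : ℤ) {b : ℤ} (hb : (b : ZMod p) ≠ 0) :
    legendreSym p a = legendreSym p (a * b) * legendreSym p b := by
  rw [legendreSym.mul, mul_assoc, ← sq, sq_one p hb, mul_one]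

theorem eq_zero_of_dvd {a : ℤ} (h : (p : ℤ) ∣ a) : legendreSym p a = 0 :=
  (eq_zero_iff p a).mpr ((ZMod.intCast_zmod_eq_zero_iff_dvd a p).mpr h)

def mulPow (s : ℕ) : ArithmeticFunction ℤ :=
  ⟨fun d => legendreSym p d * (d : ℤ) ^ s, by simp⟩

theorem mulPow_apply (s d : ℕ) : mulPow p s d = legendreSym p d * (d : ℤ) ^ s := rfl

theorem isMultiplicative_mulPow (s : ℕ) : (mulPow p s).IsMultiplicative :=
  ⟨by simp [mulPow_apply], fun {m n} _ => by
    simp only [mulPow_apply, Nat.cast_mul, legendreSym.mul, mul_pow]; ring⟩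

theorem sum_divisors_mul_pow (s : ℕ) {n : ℕ} (hn : n ≠ 0) :
    ∑ d ∈ n.divisors, legendreSym p d * (d : ℤ) ^ s
      = ∏ ℓ ∈ n.primeFactors, ∑ t ∈ range (n.factorization ℓ + 1),
          legendreSym p ℓ ^ t * (ℓ : ℤ) ^ (s * t) := by
  simp only [← mulPow_apply, (isMultiplicative_mulPow p s).sum_divisors_eq_prod_primeFactors hn]
  refine prod_congr rfl fun ℓ _ => sum_congr rfl fun t _ => ?_
  have hpow : legendreSym p ((ℓ : ℤ) ^ t) = legendreSym p ℓ ^ t := map_pow (hom p) _ _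
  rw [mulPow_apply, Nat.cast_pow, hpow, ← pow_mul, mul_comm t s]

theorem sum_divisors_mul_pow_eq_ordCompl (s n : ℕ) :
    ∑ d ∈ n.divisors, legendreSym p d * (d : ℤ) ^ s
      = ∑ d ∈ (ordCompl[p] n).divisors, legendreSym p d * (d : ℤ) ^ s :=
  Nat.sum_divisors_eq_sum_divisors_ordCompl
    (fun d hd => by rw [eq_zero_of_dvd p (Int.natCast_dvd_natCast.mpr hd), zero_mul]) n

theorem sum_divisors_neg_div_mul_pow (s : ℕ) {n : ℕ} (hn : n ≠ 0) :
    ∑ d ∈ n.divisors, legendreSym p (-((n / d : ℕ) : ℤ)) * (d : ℤ) ^ s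
      = legendreSym p (-((ordCompl[p] n : ℕ) : ℤ)) * (p : ℤ) ^ (s * n.factorization p) *
          ∑ d ∈ (ordCompl[p] n).divisors, legendreSym p d * (d : ℤ) ^ s := by
  set m := ordCompl[p] n
  have hpm : ¬ p ∣ m := Nat.not_dvd_ordCompl Fact.out hn
  calc ∑ d ∈ n.divisors, legendreSym p (-((n / d : ℕ) : ℤ)) * (d : ℤ) ^ s
      = ∑ d ∈ n.divisors, legendreSym p (-(d : ℤ)) * ((n / d : ℕ) : ℤ) ^ s :=
        Nat.sum_divisors_apply_div_comm (fun d e => legendreSym p (-(e : ℤ)) * (d : ℤ) ^ s) n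
    _ = ∑ d ∈ m.divisors, legendreSym p (-(d : ℤ)) * ((n / d : ℕ) : ℤ) ^ s := by
        refine Nat.sum_divisors_eq_sum_divisors_ordCompl (fun d hd => ?_) n
        rw [eq_zero_of_dvd p ((Int.natCast_dvd_natCast.mpr hd).neg_right), zero_mul]
    _ = ∑ d ∈ m.divisors, legendreSym p (-(d : ℤ)) * ((p : ℤ) ^ (s * n.factorization p) *
          ((m / d : ℕ) : ℤ) ^ s) := by
        refine sum_congr rfl fun d hd => ?_
        conv_lhs => rw [← Nat.ordProj_mul_ordCompl_eq_self n p]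
        rw [Nat.mul_div_assoc _ (Nat.dvd_of_mem_divisors hd), Nat.cast_mul, mul_pow,
          Nat.cast_pow, ← pow_mul, mul_comm (n.factorization p) s]
    _ = ∑ d ∈ m.divisors, legendreSym p (-((m / d : ℕ) : ℤ)) *
          ((p : ℤ) ^ (s * n.factorization p) * (d : ℤ) ^ s) :=
        Nat.sum_divisors_apply_div_comm (fun d e =>
          legendreSym p (-(d : ℤ)) * ((p : ℤ) ^ (s * n.factorization p) * (e : ℤ) ^ s)) m
    _ = _ := by
        rw [mul_sum]
        refine sum_congr rfl fun d hd => ?_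
        have hdm := Nat.dvd_of_mem_divisors hd
        have hpd : ((d : ℤ) : ZMod p) ≠ 0 := by
          rw [Int.cast_natCast, Ne, ZMod.natCast_eq_zero_iff]
          exact fun hdvd => hpm (hdvd.trans hdm)
        have hmul : -((m / d : ℕ) : ℤ) * d = -(m : ℤ) := by
          rw [neg_mul, ← Nat.cast_mul, Nat.div_mul_cancel hdm]
        rw [eq_mul_mul_of_ne_zero p _ hpd, hmul]
        ring

end legendreSym

theorem legendre_divisor_sum_product_formula_general
    (q : ℕ) [hqF : Fact q.Prime]
    (s : ℕ) (N : ℕ) (hN : 0 < N) :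
    ∑ d ∈ N.divisors,
        (legendreSym q d + legendreSym q (-((N / d : ℕ) : ℤ))) * (d : ℤ) ^ s
      = (∏ ℓ ∈ (N / q ^ (N.factorization q)).primeFactors,
          ∑ t ∈ Finset.range (N.factorization ℓ + 1),
            (legendreSym q ℓ) ^ t * (ℓ : ℤ) ^ (s * t)) *
        (1 + legendreSym q (-((N / q ^ (N.factorization q) : ℕ) : ℤ)) *
          (q : ℤ) ^ (s * N.factorization q)) := by
  have hprod : ∏ ℓ ∈ (ordCompl[q] N).primeFactors, ∑ t ∈ range (N.factorization ℓ + 1),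
        legendreSym q ℓ ^ t * (ℓ : ℤ) ^ (s * t)
      = ∑ d ∈ (ordCompl[q] N).divisors, legendreSym q d * (d : ℤ) ^ s := by
    rw [legendreSym.sum_divisors_mul_pow q s (Nat.ordCompl_pos q hN.ne').ne']
    refine prod_congr rfl fun ℓ hℓ => ?_
    have hℓq : ℓ ≠ q := by
      rintro rfl
      exact Nat.not_dvd_ordCompl hqF.out hN.ne' (Nat.dvd_of_mem_primeFactors hℓ)
    rw [Nat.factorization_ordCompl, Finsupp.erase_ne hℓq]
  rw [hprod, mul_add, mul_one, mul_comm, ← legendreSym.sum_divisors_neg_div_mul_pow q s hN.ne',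
    ← legendreSym.sum_divisors_mul_pow_eq_ordCompl, ← sum_add_distrib]
  simp only [add_mul]

/-- **Product formula for the divisor sum defining `G_K(s;N)` (prime discriminant case).**
Let `q` be an odd prime with Legendre symbol `χ = legendreSym q`, `s ≥ 0`, and `N > 0`.
Writing `β = v_q(N)` and `N₂ = N / q^β`, one has
`Σ_{0<d∣N} (χ(d) + χ(−N/d)) d^s
  = (∏_{ℓ ∣ N₂ prime} Σ_{t=0}^{v_ℓ(N)} χ(ℓ)^t ℓ^{st}) · (1 + χ(−N₂) q^{sβ})`. -/
theorem legendre_divisor_sum_product_formula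
    (q : ℕ) [hqF : Fact q.Prime] (hqodd : Odd q)
    (s : ℕ) (N : ℕ) (hN : 0 < N) :
    ∑ d ∈ N.divisors,
        (legendreSym q d + legendreSym q (-((N / d : ℕ) : ℤ))) * (d : ℤ) ^ s
      = (∏ ℓ ∈ (N / q ^ (N.factorization q)).primeFactors,
          ∑ t ∈ Finset.range (N.factorization ℓ + 1),
            (legendreSym q ℓ) ^ t * (ℓ : ℤ) ^ (s * t)) *
        (1 + legendreSym q (-((N / q ^ (N.factorization q) : ℕ) : ℤ)) *
          (q : ℤ) ^ (s * N.factorization q)) :=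
  legendre_divisor_sum_product_formula_general q (hqF := hqF) s N hN
end

section
/- Let p be a prime with p ≥ 5. Then the Kummer congruence B_{p+1}/(p+1) ≡ 1/12 (mod p) holds: the rational number bernoulli(p+1)/(p+1) − 1/12 is either 0 or has p-adic valuation padicValRat p (bernoulli(p+1)/(p+1) − 1/12) ≥ 1. -/
/-!
Faulhaber's formula writes `S = ∑_{k<p} k^(p+1)` as `p B_{p+1}` plus the terms
`B_i binom(p+2, i) p^(p+2-i) / (p+2)` with `i ≤ p`. By von Staudt–Clausen `p B_i` is
`p`-integral and `B_p = 0`, so these terms vanish modulo `p²` and `S ≡ p B_{p+1} (mod p²)`.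

On the other hand `k ↦ 2k mod p` permutes `{0, …, p-1}` and
`(2k)^(p+1) ≡ (2k mod p)^(p+1) + p ⌊2k/p⌋ 2k (mod p²)`, so summing over `k < p` gives
`(2^(p+1) - 1) S ≡ 2p ∑_{p/2 < k < p} k (mod p²)` (Voronoi's argument); as
`2^(p+1) ≡ 4 (mod p)` this becomes `12 S ≡ p (mod p²)`.
Hence `12 p B_{p+1} ≡ p (mod p²)`, i.e. `B_{p+1} ≡ 1/12 (mod p)`, and dividing by `p + 1 ≡ 1`
changes nothing.
-/

open Finset

theorem Nat.Coprime.sum_range_mul_mod {M : Type*} [AddCommMonoid M] {a n : ℕ}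
    (h : n.Coprime a) (f : ℕ → M) :
    ∑ k ∈ range n, f (a * k % n) = ∑ k ∈ range n, f k := by
  have hmaps : Set.MapsTo (fun k ↦ a * k % n) (range n : Set ℕ) (range n) := by
    intro k hk
    simp only [coe_range, Set.mem_Iio] at hk ⊢
    exact Nat.mod_lt _ (by omega)
  have hinj : Set.InjOn (fun k ↦ a * k % n) (range n : Set ℕ) := by
    intro x hx y hy hxy
    simp only [coe_range, Set.mem_Iio] at hx hy
    have := Nat.ModEq.cancel_left_of_coprime h hxy
    rwa [Nat.ModEq, Nat.mod_eq_of_lt hx, Nat.mod_eq_of_lt hy] at this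
  exact sum_nbij _ (fun k hk ↦ hmaps hk) hinj
    (((range n).finite_toSet.injOn_iff_bijOn_of_mapsTo hmaps).mp hinj).surjOn fun _ _ ↦ rfl

theorem Int.sq_dvd_pow_succ_sub_pow_succ_sub_mul {p : ℕ} (hp : p.Prime) {a b : ℤ}
    (h : (p : ℤ) ∣ a - b) : (p : ℤ) ^ 2 ∣ a ^ (p + 1) - b ^ (p + 1) - (a - b) * a := by
  have hpow : (p : ℤ) ^ 2 ∣ a ^ p - b ^ p := by simpa using dvd_sub_pow_of_dvd_sub h 1
  have hrw : a ^ (p + 1) - b ^ (p + 1) - (a - b) * a =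
      (a - b) * (a ^ p - a) + b * (a ^ p - b ^ p) := by ring
  rw [hrw]
  exact dvd_add (sq (p : ℤ) ▸ mul_dvd_mul h (Int.prime_dvd_pow_self_sub hp a))
    (hpow.mul_left b)

theorem sq_dvd_two_pow_succ_sub_one_mul_sum_range_pow_succ_sub {p : ℕ} (hp : p.Prime)
    (hp2 : p ≠ 2) :
    (p : ℤ) ^ 2 ∣ (2 ^ (p + 1) - 1) * ∑ k ∈ range p, (k : ℤ) ^ (p + 1) -
      2 * p * ∑ k ∈ range p, ((2 * k / p : ℕ) : ℤ) * k := by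
  have hterm (k : ℕ) : (p : ℤ) ^ 2 ∣
      ((2 * k : ℕ) : ℤ) ^ (p + 1) - ((2 * k % p : ℕ) : ℤ) ^ (p + 1) -
        p * (2 * k / p : ℕ) * (2 * k : ℕ) := by
    have hdiv : ((2 * k : ℕ) : ℤ) - (2 * k % p : ℕ) = p * (2 * k / p : ℕ) := by
      rw [sub_eq_iff_eq_add', ← Nat.cast_mul, ← Nat.cast_add, Nat.mod_add_div]
    have := Int.sq_dvd_pow_succ_sub_pow_succ_sub_mul hp ⟨_, hdiv⟩
    rwa [hdiv] at this
  have hperm := ((Nat.coprime_primes hp Nat.prime_two).mpr hp2).sum_range_mul_mod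
    fun k ↦ (k : ℤ) ^ (p + 1)
  refine (dvd_sum (s := range p) fun k _ ↦ hterm k).trans (dvd_of_eq ?_)
  have hdouble : ∑ k ∈ range p, ((2 * k : ℕ) : ℤ) ^ (p + 1) =
      2 ^ (p + 1) * ∑ k ∈ range p, (k : ℤ) ^ (p + 1) := by
    simp only [Nat.cast_mul, Nat.cast_ofNat, mul_pow, mul_sum]
  have hcarry : ∑ k ∈ range p, (p : ℤ) * (2 * k / p : ℕ) * (2 * k : ℕ) =
      2 * p * ∑ k ∈ range p, ((2 * k / p : ℕ) : ℤ) * k := by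
    rw [mul_sum]
    exact sum_congr rfl fun k _ ↦ by push_cast; ring
  rw [sum_sub_distrib, sum_sub_distrib, hperm, hdouble, hcarry]
  ring

theorem two_mul_sum_range_two_mul_div_mul (r : ℕ) :
    2 * ∑ k ∈ range (2 * r + 1), 2 * k / (2 * r + 1) * k = r * (3 * r + 1) := by
  have hsplit := sum_range_add (fun k ↦ 2 * k / (2 * r + 1) * k) (r + 1) r
  rw [show r + 1 + r = 2 * r + 1 by ring] at hsplit
  have hlow : ∑ k ∈ range (r + 1), 2 * k / (2 * r + 1) * k = 0 :=
    sum_eq_zero fun k hk ↦ by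
      rw [Nat.div_eq_of_lt (by rw [mem_range] at hk; omega), zero_mul]
  have hhigh : ∑ j ∈ range r, 2 * (r + 1 + j) / (2 * r + 1) * (r + 1 + j) =
      ∑ j ∈ range r, (r + 1 + j) :=
    sum_congr rfl fun j hj ↦ by
      rw [mem_range] at hj
      rw [Nat.div_eq_of_lt_le (k := 1) (by omega) (by omega), one_mul]
  rw [hsplit, hlow, hhigh, zero_add, sum_add_distrib, sum_const, card_range, smul_eq_mul]
  have hgauss := sum_range_id_mul_two r
  rcases r with _ | r
  · simp
  · simp only [Nat.add_sub_cancel] at hgauss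
    nlinarith [hgauss]

theorem dvd_sum_range_pow_succ {p : ℕ} (hp : p.Prime) (hp5 : 5 ≤ p) :
    (p : ℤ) ∣ ∑ k ∈ range p, (k : ℤ) ^ (p + 1) := by
  have := Fact.mk hp
  have hthree : (3 : ZMod p) ≠ 0 := fun h ↦ absurd
    (Nat.le_of_dvd three_pos ((ZMod.natCast_eq_zero_iff 3 p).mp (by exact_mod_cast h))) (by omega)
  have h := (ZMod.intCast_zmod_eq_zero_iff_dvd _ p).mpr ((dvd_pow_self (p : ℤ) two_ne_zero).trans
    (sq_dvd_two_pow_succ_sub_one_mul_sum_range_pow_succ_sub hp (by omega)))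
  push_cast at h
  rw [ZMod.natCast_self, pow_succ, ZMod.pow_card] at h
  rw [← ZMod.intCast_zmod_eq_zero_iff_dvd]
  push_cast
  exact (mul_eq_zero.mp (by linear_combination h : (3 : ZMod p) * _ = 0)).resolve_left hthree

theorem sq_dvd_twelve_mul_sum_range_pow_succ_sub {p : ℕ} (hp : p.Prime) (hp5 : 5 ≤ p) :
    (p : ℤ) ^ 2 ∣ 12 * ∑ k ∈ range p, (k : ℤ) ^ (p + 1) - p := by
  have := Fact.mk hp
  have hvoronoi := sq_dvd_two_pow_succ_sub_one_mul_sum_range_pow_succ_sub hp (by omega)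
  set U := ∑ k ∈ range p, ((2 * k / p : ℕ) : ℤ) * k
  obtain ⟨s, hs⟩ := dvd_sum_range_pow_succ hp hp5
  obtain ⟨r, hr⟩ := hp.odd_of_ne_two (by omega)
  have hU : 2 * (U : ZMod p) = r * (3 * r + 1) := by
    have := two_mul_sum_range_two_mul_div_mul r
    rw [← hr] at this
    simp only [U]
    exact_mod_cast congrArg (Nat.cast : ℕ → ZMod p) this
  have hquot : (p : ℤ) ∣ (2 ^ (p + 1) - 1) * s - 2 * U := by
    rw [hs, show (2 ^ (p + 1) - 1) * (p * s) - 2 * p * U =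
      p * ((2 ^ (p + 1) - 1) * s - 2 * U) by ring, sq] at hvoronoi
    exact (mul_dvd_mul_iff_left (Int.natCast_ne_zero.mpr hp.ne_zero)).mp hvoronoi
  rw [hs, show 12 * (p * s) - p = p * (12 * s - 1) by ring, sq]
  refine mul_dvd_mul_left _ ?_
  rw [← ZMod.intCast_zmod_eq_zero_iff_dvd] at hquot ⊢
  have hp0 : ((2 * r + 1 : ℕ) : ZMod p) = 0 := by rw [← hr, ZMod.natCast_self]
  push_cast at hquot hp0 ⊢
  rw [pow_succ, ZMod.pow_card] at hquot
  -- `3 s = 2 U = r (3 r + 1)` and `4 r (3 r + 1) = 1 + (2 r + 1) (6 r - 1)`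
  linear_combination 4 * hquot + 4 * hU + (6 * r - 1) * hp0

namespace padicNorm

variable {p : ℕ} [hp : Fact p.Prime]

theorem le_zpow_neg_iff {q : ℚ} {c : ℤ} :
    padicNorm p q ≤ (p : ℚ) ^ (-c) ↔ q = 0 ∨ c ≤ padicValRat p q := by
  rcases eq_or_ne q 0 with rfl | hq
  · simp [zpow_nonneg]
  · rw [padicNorm.eq_zpow_of_nonzero hq, zpow_le_zpow_iff_right₀ (mod_cast hp.out.one_lt),
      neg_le_neg_iff]
    simp [hq]

theorem one_div_natCast_prime_le {q : ℕ} (hq : q.Prime) : padicNorm p (1 / q) ≤ p := by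
  have := Fact.mk hq
  rw [padicNorm.div, padicNorm.one]
  rcases eq_or_ne q p with rfl | hqp
  · rw [padicNorm_p_of_prime, one_div, inv_inv]
  · rw [padicNorm_of_prime_of_ne hqp.symm, div_one]
    exact_mod_cast hp.out.one_lt.le

theorem bernoulli_le (n : ℕ) : padicNorm p (bernoulli n) ≤ p := by
  obtain ⟨k, rfl | rfl⟩ := n.even_or_odd'
  · obtain ⟨z, hz⟩ := Bernoulli.vonStaudt_clausen k
    rw [eq_sub_of_add_eq hz.symm]
    refine padicNorm.sub.trans (max_le ?_ ?_)
    · exact (padicNorm.of_int z).trans (mod_cast hp.out.one_lt.le)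
    · exact padicNorm.sum_le' (fun q hq ↦ one_div_natCast_prime_le (mem_filter.mp hq).2.1)
        (Nat.cast_nonneg p)
  · rcases k.eq_zero_or_pos with rfl | hk
    · rw [bernoulli_one, neg_div, padicNorm.neg]
      exact_mod_cast one_div_natCast_prime_le Nat.prime_two
    · rw [bernoulli_eq_zero_of_odd (odd_two_mul_add_one k) (by omega), padicNorm.zero]
      exact Nat.cast_nonneg p

theorem natCast_add_eq_one_iff (m : ℕ) : padicNorm p ((p + m : ℕ) : ℚ) = 1 ↔ ¬p ∣ m := by
  rw [padicNorm.nat_eq_one_iff, Nat.dvd_add_right dvd_rfl]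

theorem sum_range_pow_succ_sub_mul_bernoulli_le (hp2 : p ≠ 2) :
    padicNorm p (∑ k ∈ range p, (k : ℚ) ^ (p + 1) - p * bernoulli (p + 1)) ≤
      (p : ℚ) ^ (-2 : ℤ) := by
  have hlast : bernoulli (p + 1) * ((p + 1 + 1).choose (p + 1) : ℕ) *
      (p : ℚ) ^ (p + 1 + 1 - (p + 1)) / (((p + 1 : ℕ) : ℚ) + 1) = p * bernoulli (p + 1) := by
    rw [Nat.choose_succ_self_right, show p + 1 + 1 - (p + 1) = 1 by omega, pow_one]
    push_cast
    field_simp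
  rw [sum_range_pow, sum_range_succ, hlast, add_sub_cancel_right]
  refine padicNorm.sum_le' (fun i hi ↦ ?_) (by positivity)
  rcases (Nat.lt_succ_iff.mp (mem_range.mp hi)).lt_or_eq with hip | rfl
  · have hden : (((p + 1 : ℕ) : ℚ) + 1) = ((p + 2 : ℕ) : ℚ) := by push_cast; ring
    rw [hden, padicNorm.div, padicNorm.mul, padicNorm.mul, IsAbsoluteValue.abv_pow (padicNorm p),
      padicNorm_p_of_prime, (natCast_add_eq_one_iff 2).mpr
        fun h ↦ hp2 ((Nat.prime_dvd_prime_iff_eq hp.out Nat.prime_two).mp h), div_one]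
    calc padicNorm p (bernoulli i) * padicNorm p ((p + 1 + 1).choose i : ℕ) *
          (p : ℚ)⁻¹ ^ (p + 1 + 1 - i)
        ≤ p * 1 * (p : ℚ)⁻¹ ^ 3 := by
          have hpow : (p : ℚ)⁻¹ ^ (p + 1 + 1 - i) ≤ (p : ℚ)⁻¹ ^ 3 :=
            pow_le_pow_of_le_one (by positivity)
              (inv_le_one_of_one_le₀ (mod_cast hp.out.one_lt.le)) (by omega)
          gcongr ?_ * ?_ * ?_
          exacts [padicNorm.nonneg _, bernoulli_le i, padicNorm.of_nat _]
      _ = (p : ℚ) ^ (-2 : ℤ) := by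
          have : (p : ℚ) ≠ 0 := by exact_mod_cast hp.out.ne_zero
          field_simp
  · rw [bernoulli_eq_zero_of_odd (hp.out.odd_of_ne_two hp2) hp.out.one_lt]
    simp

theorem twelve_eq_one (hp5 : 5 ≤ p) : padicNorm p 12 = 1 := by
  rw [show (12 : ℚ) = (12 : ℕ) by norm_num, padicNorm.nat_eq_one_iff]
  intro h
  rcases (Nat.Prime.dvd_mul hp.out).mp (show p ∣ 4 * 3 from h) with h | h <;>
    have := Nat.le_of_dvd (by norm_num) h <;> omega

theorem bernoulli_succ_sub_one_div_twelve_le (hp5 : 5 ≤ p) :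
    padicNorm p (bernoulli (p + 1) - 1 / 12) ≤ (p : ℚ) ^ (-1 : ℤ) := by
  set S : ℚ := ∑ k ∈ range p, (k : ℚ) ^ (p + 1)
  have hfaulhaber := sum_range_pow_succ_sub_mul_bernoulli_le (p := p) (by omega)
  have hvoronoi : padicNorm p (12 * S - p) ≤ (p : ℚ) ^ (-2 : ℤ) := by
    have := (padicNorm.dvd_iff_norm_le (n := 2)).mp
      (by exact_mod_cast sq_dvd_twelve_mul_sum_range_pow_succ_sub hp.out hp5)
    push_cast at this
    exact this
  have hsum : padicNorm p (12 * p * (bernoulli (p + 1) - 1 / 12)) ≤ (p : ℚ) ^ (-2 : ℤ) := by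
    rw [show 12 * p * (bernoulli (p + 1) - 1 / 12) =
      12 * -(S - p * bernoulli (p + 1)) + (12 * S - p) by ring]
    refine padicNorm.nonarchimedean.trans (max_le ?_ hvoronoi)
    rwa [padicNorm.mul, padicNorm.neg, twelve_eq_one hp5, one_mul]
  rw [padicNorm.mul, padicNorm.mul, twelve_eq_one hp5, padicNorm_p_of_prime, one_mul] at hsum
  have hp0 : (0 : ℚ) < p := by exact_mod_cast hp.out.pos
  calc padicNorm p (bernoulli (p + 1) - 1 / 12)
      = p * ((p : ℚ)⁻¹ * padicNorm p (bernoulli (p + 1) - 1 / 12)) := by field_simp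
    _ ≤ p * (p : ℚ) ^ (-2 : ℤ) := by gcongr
    _ = (p : ℚ) ^ (-1 : ℤ) := by rw [← zpow_one_add₀ hp0.ne']; norm_num

end padicNorm

/-- **Kummer congruence `B_{p+1}/(p+1) ≡ 1/12 (mod p)`.**
For a prime `p ≥ 5`, the rational number `B_{p+1}/(p+1) − 1/12` is either `0`
or has `p`-adic valuation at least `1`. -/
theorem kummer_congruence_bernoulli_succ
    (p : ℕ) (hp : p.Prime) (hp5 : 5 ≤ p) :
    bernoulli (p + 1) / ((p : ℚ) + 1) - 1 / 12 = 0 ∨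
      1 ≤ padicValRat p (bernoulli (p + 1) / ((p : ℚ) + 1) - 1 / 12) := by
  have := Fact.mk hp
  rw [← padicNorm.le_zpow_neg_iff]
  have hsucc : padicNorm p ((p : ℚ) + 1) = 1 := by
    exact_mod_cast (padicNorm.natCast_add_eq_one_iff 1).mpr (Nat.Prime.not_dvd_one hp)
  have hsplit : bernoulli (p + 1) / ((p : ℚ) + 1) - 1 / 12 =
      (bernoulli (p + 1) - 1 / 12) / ((p : ℚ) + 1) - p / (12 * ((p : ℚ) + 1)) := by
    field_simp
    ring
  rw [hsplit]
  refine padicNorm.sub.trans (max_le ?_ ?_)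
  · rw [padicNorm.div, hsucc, div_one]
    exact padicNorm.bernoulli_succ_sub_one_div_twelve_le hp5
  · rw [padicNorm.div, padicNorm.mul, hsucc, padicNorm.twelve_eq_one hp5,
      padicNorm.padicNorm_p_of_prime]
    simp
end
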